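/- Let α ∈ (0,2). There exist constants 0 < c' ≤ C' (depending on α, the Li–Yau constants, the subordinator constants and the volume comparability constants) such that for all x, y ∈ M and t > 0: c' · t / ( V(x, t^{1/α} + d(x,y)) · (t^{1/α} + d(x,y))^{α} ) ≤ P_t^α(x,y) ≤ C' · t / ( V(x, t^{1/α} + d(x,y)) · (t^{1/α} + d(x,y))^{α} ). -/

import Mathlib

/-!
Write `ρ = t^{1/α} + d(x,y)` and `V(y,r) = μ(B(y,r))`. For the lower bound, restrict the
integral to `u ∈ (ρ², 2ρ²]`: there the Gaussian factor is bounded below, `V(y,√u) ≍ V(y,ρ)` by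
doubling, and `η_t(u) ≍ t u^{-1-α/2}` because `u > t^{2/α}`.

For the upper bound, the Gaussian decay in `d(x,y)²/u` and the super-polynomial decay of `η_t(u)`
in `t^{2/α}/u` combine into decay of any order in `ρ²/u`, which absorbs the volume ratio
`V(y,ρ)/V(y,√u) ≲ (1 + ρ²/u)^{ν/2}`. This bounds the integrand by `t/V(y,ρ)` times the profile
`u^{-1-α/2} min(1, (u/ρ²)^α)`, whose integral is `(4/α) ρ^{-α}`. Finally `V(x,ρ) ≍ V(y,ρ)`
since `d(x,y) ≤ ρ`.
-/

open MeasureTheory Metric Real Filter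

/-- The fractional heat kernel: the kernel subordinated to the heat kernel `h` via the
stable subordinator densities `η`: `P_t^α(x,y) = ∫₀^∞ h_u(x,y) η_t(u) du`. -/
noncomputable def Pker {M : Type*} (h : ℝ → M → M → ℝ) (η : ℝ → ℝ → ℝ)
    (t : ℝ) (x y : M) : ℝ :=
  ∫ u in Set.Ioi (0:ℝ), h u x y * η t u

open Set

lemma exists_rpow_mul_exp_neg_le (p : ℝ) {b : ℝ} (hb : 0 < b) :
    ∃ K, ∀ s, 1 ≤ s → s ^ p * exp (-(b * s)) ≤ K := by
  obtain ⟨A, hA⟩ := eventually_atTop.1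
    ((tendsto_rpow_mul_exp_neg_mul_atTop_nhds_zero p b hb).eventually (gt_mem_nhds one_pos))
  have hcont : ContinuousOn (fun s : ℝ => s ^ p * exp (-(b * s))) (Icc 1 A) :=
    (continuousOn_id.rpow_const fun s hs => Or.inl (show s ≠ 0 by linarith [hs.1])).mul
      (by fun_prop)
  obtain ⟨C, hC⟩ := isCompact_Icc.exists_bound_of_continuousOn hcont
  refine ⟨max 1 C, fun s hs => ?_⟩
  rcases le_total s A with hsA | hAs
  · exact ((le_abs_self _).trans (hC s ⟨hs, hsA⟩)).trans (le_max_right _ _)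
  · exact (neg_mul b s ▸ hA s hAs).le.trans (le_max_left _ _)

lemma exists_exp_neg_le_one_add_rpow_neg (p : ℝ) {b : ℝ} (hb : 0 < b) :
    ∃ K, 0 ≤ K ∧ ∀ s, 0 ≤ s → exp (-(b * s)) ≤ K * (1 + s) ^ (-p) := by
  obtain ⟨K, hK⟩ := exists_rpow_mul_exp_neg_le p hb
  have hK0 : 0 ≤ K := (by positivity : (0:ℝ) ≤ 1 ^ p * exp (-(b * 1))).trans (hK 1 le_rfl)
  refine ⟨exp b * K, by positivity, fun s hs => ?_⟩
  have hs1 : 0 < 1 + s := by linarith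
  have hshift : exp (-(b * s)) = exp b * exp (-(b * (1 + s))) := by rw [← exp_add]; ring_nf
  calc exp (-(b * s)) = exp b * ((1 + s) ^ p * exp (-(b * (1 + s)))) * (1 + s) ^ (-p) := by
        rw [hshift, rpow_neg hs1.le]
        field_simp
    _ ≤ exp b * K * (1 + s) ^ (-p) := by
        gcongr
        exact hK _ (by linarith)

lemma exists_rpow_mul_exp_neg_rpow_le_one_add_rpow_neg (p : ℝ) {N b β : ℝ} (hN : 0 ≤ N)
    (hb : 0 < b) (hβ : 0 < β) :
    ∃ K, 0 ≤ K ∧ ∀ w, 1 ≤ w → w ^ p * exp (-(b * w ^ β)) ≤ K * (1 + w) ^ (-N) := by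
  obtain ⟨K, hK⟩ := exists_rpow_mul_exp_neg_le ((p + N) / β) hb
  have hK0 : 0 ≤ K :=
    (by positivity : (0:ℝ) ≤ 1 ^ ((p + N) / β) * exp (-(b * 1))).trans (hK 1 le_rfl)
  refine ⟨2 ^ N * K, by positivity, fun w hw => ?_⟩
  have hw0 : 0 < w := by linarith
  have hpow : (w ^ β) ^ ((p + N) / β) = w ^ (p + N) := by
    rw [← rpow_mul hw0.le, mul_div_cancel₀ _ hβ.ne']
  have hdecay : w ^ (p + N) * exp (-(b * w ^ β)) ≤ K := by
    simpa only [hpow] using hK (w ^ β) (one_le_rpow hw hβ.le)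
  have hgrow : w ^ (-N) ≤ 2 ^ N * (1 + w) ^ (-N) := by
    calc w ^ (-N) = 2 ^ N * (2 * w) ^ (-N) := by
          rw [mul_rpow zero_le_two hw0.le, ← mul_assoc, ← rpow_add two_pos]; simp
      _ ≤ 2 ^ N * (1 + w) ^ (-N) := mul_le_mul_of_nonneg_left
          (rpow_le_rpow_of_nonpos (by linarith) (by linarith) (by linarith)) (by positivity)
  calc w ^ p * exp (-(b * w ^ β)) = w ^ (p + N) * exp (-(b * w ^ β)) * w ^ (-N) := by
        rw [mul_right_comm, ← rpow_add hw0]; simp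
    _ ≤ K * (2 ^ N * (1 + w) ^ (-N)) := by gcongr
    _ = 2 ^ N * K * (1 + w) ^ (-N) := by ring

lemma one_add_div_rpow_neg_le_min {a u α : ℝ} (ha : 0 < a) (hu : 0 < u) (hα : 0 ≤ α) :
    (1 + a / u) ^ (-α) ≤ min 1 ((u / a) ^ α) := by
  have hau : 0 < a / u := div_pos ha hu
  refine le_min (rpow_le_one_of_one_le_of_nonpos (by linarith) (by linarith)) ?_
  calc (1 + a / u) ^ (-α) ≤ (a / u) ^ (-α) :=
        rpow_le_rpow_of_nonpos hau (by linarith) (by linarith)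
    _ = (u / a) ^ α := by rw [rpow_neg hau.le, ← inv_rpow hau.le, inv_div]

/-- Since `(1 + D/u)(1 + T/u) ≥ (1 + ρ²/u)/2`, decay of order `ν/2 + α` in `D/u` and in `T/u`
beats the growth `(1 + ρ²/u)^{ν/2}` with room `(1 + ρ²/u)^{-α}` to spare. -/
lemma mul_le_min_of_rpow_decay {H E A B ρ D T u ν α : ℝ} (hu : 0 < u) (hρ : 0 < ρ)
    (hν : 0 ≤ ν) (hα : 0 ≤ α) (hD : 0 ≤ D) (hT : 0 ≤ T) (hρDT : ρ ^ 2 ≤ 2 * (T + D))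
    (hA : 0 ≤ A) (hB : 0 ≤ B) (hE : 0 ≤ E)
    (hH : H ≤ A * (1 + ρ ^ 2 / u) ^ (ν / 2) * (1 + D / u) ^ (-(ν / 2 + α)))
    (hEB : E ≤ B * (1 + T / u) ^ (-(ν / 2 + α))) :
    H * E ≤ 2 ^ (ν / 2 + α) * A * B * min 1 ((u / ρ ^ 2) ^ α) := by
  set N := ν / 2 + α
  have hN : 0 ≤ N := by positivity
  have hq : 0 < 1 + ρ ^ 2 / u := by positivity
  have hD' : 0 ≤ D / u := div_nonneg hD hu.le
  have hT' : 0 ≤ T / u := div_nonneg hT hu.le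
  have hprod : (1 + ρ ^ 2 / u) / 2 ≤ (1 + D / u) * (1 + T / u) := by
    have : ρ ^ 2 / u ≤ 2 * (T / u + D / u) := by
      rw [← add_div, mul_div_assoc']; exact div_le_div_of_nonneg_right hρDT hu.le
    nlinarith [mul_nonneg hD' hT']
  have hdecay : (1 + D / u) ^ (-N) * (1 + T / u) ^ (-N) ≤ 2 ^ N * (1 + ρ ^ 2 / u) ^ (-N) := by
    calc (1 + D / u) ^ (-N) * (1 + T / u) ^ (-N) = ((1 + D / u) * (1 + T / u)) ^ (-N) := by
          rw [mul_rpow (by positivity) (by positivity)]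
      _ ≤ ((1 + ρ ^ 2 / u) / 2) ^ (-N) :=
          rpow_le_rpow_of_nonpos (by positivity) hprod (by linarith)
      _ = 2 ^ N * (1 + ρ ^ 2 / u) ^ (-N) := by
          rw [div_rpow hq.le zero_le_two, rpow_neg zero_le_two, div_inv_eq_mul, mul_comm]
  have hmerge :
      (1 + ρ ^ 2 / u) ^ (ν / 2) * (1 + ρ ^ 2 / u) ^ (-N) = (1 + ρ ^ 2 / u) ^ (-α) := by
    rw [← rpow_add hq]; congr 1; ring
  calc H * E ≤ A * (1 + ρ ^ 2 / u) ^ (ν / 2) * (1 + D / u) ^ (-N) * (B * (1 + T / u) ^ (-N)) :=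
        mul_le_mul hH hEB hE (by positivity)
    _ = A * B * (1 + ρ ^ 2 / u) ^ (ν / 2) * ((1 + D / u) ^ (-N) * (1 + T / u) ^ (-N)) := by
        ring
    _ ≤ A * B * (1 + ρ ^ 2 / u) ^ (ν / 2) * (2 ^ N * (1 + ρ ^ 2 / u) ^ (-N)) :=
        mul_le_mul_of_nonneg_left hdecay (by positivity)
    _ = 2 ^ N * A * B * (1 + ρ ^ 2 / u) ^ (-α) := by rw [← hmerge]; ring
    _ ≤ 2 ^ N * A * B * min 1 ((u / ρ ^ 2) ^ α) := mul_le_mul_of_nonneg_left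
        (one_add_div_rpow_neg_le_min (by positivity) hu hα) (by positivity)

noncomputable def stableProfile (α r u : ℝ) : ℝ := u ^ (-1 - α / 2) * min 1 ((u / r ^ 2) ^ α)

lemma stableProfile_eqOn_Ioc {α r : ℝ} (hr : 0 < r) (hα : 0 ≤ α) :
    EqOn (stableProfile α r) (fun u => r ^ (-(2 * α)) * u ^ (α / 2 - 1)) (Ioc 0 (r ^ 2)) := by
  intro u ⟨hu, hur⟩
  have hmin : min 1 ((u / r ^ 2) ^ α) = (u / r ^ 2) ^ α :=
    min_eq_right (rpow_le_one (by positivity) ((div_le_one (by positivity)).2 hur) hα)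
  have hr2α : (r ^ 2) ^ α = r ^ (2 * α) := by rw [← rpow_natCast, ← rpow_mul hr.le]; norm_num
  rw [stableProfile, hmin, div_rpow hu.le (by positivity), hr2α, div_eq_mul_inv (u ^ α),
    ← rpow_neg hr.le, ← mul_assoc, mul_comm _ (u ^ α), ← rpow_add hu]
  ring_nf

lemma stableProfile_eqOn_Ioi {α r : ℝ} (hr : 0 < r) (hα : 0 ≤ α) :
    EqOn (stableProfile α r) (fun u => u ^ (-1 - α / 2)) (Ioi (r ^ 2)) := by
  intro u hu
  have hmin : min 1 ((u / r ^ 2) ^ α) = 1 :=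
    min_eq_left (one_le_rpow ((one_le_div (by positivity)).2 (le_of_lt hu)) hα)
  rw [stableProfile, hmin, mul_one]

lemma integrableOn_stableProfile {α r : ℝ} (hr : 0 < r) (hα : 0 < α) :
    IntegrableOn (stableProfile α r) (Ioi 0) := by
  have hr2 : 0 < r ^ 2 := by positivity
  rw [← Ioc_union_Ioi_eq_Ioi hr2.le]
  refine IntegrableOn.union ?_ ?_
  · refine IntegrableOn.congr_fun ?_ (stableProfile_eqOn_Ioc hr hα.le).symm measurableSet_Ioc
    exact ((intervalIntegrable_iff_integrableOn_Ioc_of_le hr2.le).1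
      (intervalIntegral.intervalIntegrable_rpow' (by linarith))).const_mul _
  · exact (integrableOn_Ioi_rpow_of_lt (by linarith) hr2).congr_fun
      (stableProfile_eqOn_Ioi hr hα.le).symm measurableSet_Ioi

lemma integral_stableProfile {α r : ℝ} (hr : 0 < r) (hα : 0 < α) :
    ∫ u in Ioi 0, stableProfile α r u = 4 / α * r ^ (-α) := by
  have hr2 : 0 < r ^ 2 := by positivity
  have hint := integrableOn_stableProfile hr hα
  rw [← Ioc_union_Ioi_eq_Ioi hr2.le] at hint ⊢
  rw [setIntegral_union (Ioc_disjoint_Ioi le_rfl) measurableSet_Ioi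
      (hint.mono_set subset_union_left) (hint.mono_set subset_union_right),
    setIntegral_congr_fun measurableSet_Ioc (stableProfile_eqOn_Ioc hr hα.le),
    setIntegral_congr_fun measurableSet_Ioi (stableProfile_eqOn_Ioi hr hα.le),
    integral_const_mul, ← intervalIntegral.integral_of_le hr2.le,
    integral_rpow (Or.inl (by linarith)), integral_Ioi_rpow_of_lt (by linarith) hr2,
    zero_rpow (by linarith), sub_zero, ← rpow_natCast, ← rpow_mul hr.le, ← rpow_mul hr.le,
    mul_div_assoc', ← rpow_add hr]
  have e₁ : -(2 * α) + (2:ℕ) * (α / 2 - 1 + 1) = -α := by push_cast; ring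
  have e₂ : (2:ℕ) * (-1 - α / 2 + 1) = -α := by push_cast; ring
  rw [e₁, e₂, show α / 2 - 1 + 1 = α / 2 by ring, show -1 - α / 2 + 1 = -(α / 2) by ring]
  field_simp
  ring

lemma integrableOn_of_le_stableProfile {g : ℝ → ℝ} {α r A : ℝ} (hα : 0 < α) (hr : 0 < r)
    (hg : AEStronglyMeasurable g (volume.restrict (Ioi 0))) (hg0 : ∀ u, 0 < u → 0 ≤ g u)
    (hgle : ∀ u, 0 < u → g u ≤ A * stableProfile α r u) :
    IntegrableOn g (Ioi 0) := by
  refine Integrable.mono' ((integrableOn_stableProfile hr hα).const_mul A) hg ?_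
  filter_upwards [self_mem_ae_restrict measurableSet_Ioi] with u hu
  rw [Real.norm_of_nonneg (hg0 u hu)]
  exact hgle u hu

lemma integral_le_of_le_stableProfile {g : ℝ → ℝ} {α r A : ℝ} (hα : 0 < α) (hr : 0 < r)
    (hg : IntegrableOn g (Ioi 0)) (hgle : ∀ u, 0 < u → g u ≤ A * stableProfile α r u) :
    ∫ u in Ioi 0, g u ≤ A * (4 / α * r ^ (-α)) := by
  rw [← integral_stableProfile hr hα, ← integral_const_mul]
  exact setIntegral_mono_on hg ((integrableOn_stableProfile hr hα).const_mul A)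
    measurableSet_Ioi hgle

lemma mul_le_integral_Ioi_of_le_on_Ioc {g : ℝ → ℝ} {a b m : ℝ} (ha : 0 ≤ a) (hab : a ≤ b)
    (hg : IntegrableOn g (Ioi 0)) (hg0 : ∀ u, 0 < u → 0 ≤ g u) (hm : ∀ u ∈ Ioc a b, m ≤ g u) :
    m * (b - a) ≤ ∫ u in Ioi 0, g u := by
  have hsub : Ioc a b ⊆ Ioi 0 := fun u hu => ha.trans_lt hu.1
  calc m * (b - a) = m * volume.real (Ioc a b) := by rw [Real.volume_real_Ioc_of_le hab]
    _ ≤ ∫ u in Ioc a b, g u :=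
        setIntegral_ge_of_const_le_real measurableSet_Ioc (by simp) hm (hg.mono_set hsub)
    _ ≤ ∫ u in Ioi 0, g u :=
        setIntegral_mono_set hg ((ae_restrict_iff' measurableSet_Ioi).2 (ae_of_all _ hg0))
          hsub.eventuallyLE

/-- The small-time (`u ≤ t^{2/α}`) comparison function of the stable subordinator density. -/
noncomputable def stableSmallTime (α t u : ℝ) : ℝ :=
  t ^ (1 / (2 - α)) * u ^ (-((4 - α) / (4 - 2 * α))) *
    exp (-(((2 - α) / 2) * (α / 2) ^ (α / (2 - α))) * t ^ (2 / (2 - α)) * u ^ (-(α / (2 - α))))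

lemma stableSmallTime_pos {α t u : ℝ} (ht : 0 < t) (hu : 0 < u) :
    0 < stableSmallTime α t u := by
  unfold stableSmallTime; positivity

lemma stableSmallTime_eq {α t u : ℝ} (hα0 : 0 < α) (hα2 : α < 2) (ht : 0 < t) (hu : 0 < u) :
    stableSmallTime α t u = t * u ^ (-1 - α / 2) *
      ((t ^ (2 / α) / u) ^ (α * (α - 1) / (2 * (2 - α))) *
        exp (-((2 - α) / 2 * (α / 2) ^ (α / (2 - α)) * (t ^ (2 / α) / u) ^ (α / (2 - α))))) := by
  have h2α : 2 - α ≠ 0 := by linarith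
  have h42α : 4 - 2 * α ≠ 0 := by linarith
  have hw : 0 < t ^ (2 / α) / u := by positivity
  have hlog : log (t ^ (2 / α) / u) = 2 / α * log t - log u := by
    rw [log_div (by positivity) hu.ne', log_rpow ht]
  have hβ : (t ^ (2 / α) / u) ^ (α / (2 - α)) = t ^ (2 / (2 - α)) * u ^ (-(α / (2 - α))) := by
    rw [div_rpow (by positivity) hu.le, ← rpow_mul ht.le, rpow_neg hu.le, div_eq_mul_inv]
    field_simp
  rw [stableSmallTime, hβ, rpow_def_of_pos hw, hlog, mul_assoc _ (t ^ (2 / (2 - α)))]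
  simp only [rpow_def_of_pos ht, rpow_def_of_pos hu]
  nth_rewrite 3 [← exp_log ht]
  simp only [← exp_add]
  congr 1
  field_simp
  ring

lemma exists_stable_density_le {α Cs N : ℝ} {η : ℝ → ℝ → ℝ} (hα0 : 0 < α) (hα2 : α < 2)
    (hCs : 0 ≤ Cs) (hN : 0 ≤ N)
    (hsmall : ∀ t u, 0 < t → 0 < u → u ≤ t ^ (2 / α) → η t u ≤ Cs * stableSmallTime α t u)
    (hlarge : ∀ t u, 0 < t → 0 < u → t ^ (2 / α) < u → η t u ≤ Cs * (t * u ^ (-1 - α / 2))) :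
    ∃ K, 0 ≤ K ∧ ∀ t u, 0 < t → 0 < u →
      η t u ≤ K * (t * u ^ (-1 - α / 2)) * (1 + t ^ (2 / α) / u) ^ (-N) := by
  have h2α : 0 < 2 - α := by linarith
  obtain ⟨K₀, hK₀, hdecay⟩ := exists_rpow_mul_exp_neg_rpow_le_one_add_rpow_neg
    (α * (α - 1) / (2 * (2 - α))) hN
    (by positivity : 0 < (2 - α) / 2 * (α / 2) ^ (α / (2 - α))) (by positivity : 0 < α / (2 - α))
  refine ⟨Cs * max K₀ (2 ^ N), by positivity, fun t u ht hu => ?_⟩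
  have hw : 0 < 1 + t ^ (2 / α) / u := by positivity
  rcases le_or_gt u (t ^ (2 / α)) with hut | hut
  · calc η t u ≤ Cs * stableSmallTime α t u := hsmall t u ht hu hut
      _ ≤ Cs * (t * u ^ (-1 - α / 2) * (K₀ * (1 + t ^ (2 / α) / u) ^ (-N))) := by
          rw [stableSmallTime_eq hα0 hα2 ht hu]
          exact mul_le_mul_of_nonneg_left (mul_le_mul_of_nonneg_left
            (hdecay _ ((one_le_div hu).2 hut)) (by positivity)) hCs
      _ = Cs * K₀ * (t * u ^ (-1 - α / 2)) * (1 + t ^ (2 / α) / u) ^ (-N) := by ring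
      _ ≤ Cs * max K₀ (2 ^ N) * (t * u ^ (-1 - α / 2)) * (1 + t ^ (2 / α) / u) ^ (-N) := by
          gcongr
          exact le_max_left _ _
  · have hsmallw : 1 ≤ 2 ^ N * (1 + t ^ (2 / α) / u) ^ (-N) := by
      calc (1 : ℝ) = 2 ^ N * 2 ^ (-N) := by rw [← rpow_add two_pos]; simp
        _ ≤ 2 ^ N * (1 + t ^ (2 / α) / u) ^ (-N) := by
          refine mul_le_mul_of_nonneg_left
            (rpow_le_rpow_of_nonpos hw ?_ (by linarith)) (by positivity)
          linarith [(div_lt_one hu).2 hut]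
    calc η t u ≤ Cs * (t * u ^ (-1 - α / 2)) := hlarge t u ht hu hut
      _ ≤ Cs * (t * u ^ (-1 - α / 2)) * (2 ^ N * (1 + t ^ (2 / α) / u) ^ (-N)) :=
          le_mul_of_one_le_right (by positivity) hsmallw
      _ = Cs * 2 ^ N * (t * u ^ (-1 - α / 2)) * (1 + t ^ (2 / α) / u) ^ (-N) := by ring
      _ ≤ Cs * max K₀ (2 ^ N) * (t * u ^ (-1 - α / 2)) * (1 + t ^ (2 / α) / u) ^ (-N) := by
          gcongr
          exact le_max_right _ _

lemma rpow_two_div_eq_sq {t : ℝ} (ht : 0 < t) (α : ℝ) : t ^ (2 / α) = (t ^ (1 / α)) ^ 2 := by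
  rw [← rpow_natCast, ← rpow_mul ht.le]; ring_nf

lemma measurable_heat_mul_density {M : Type*} [MeasurableSpace M] {h : ℝ → M → M → ℝ}
    {η : ℝ → ℝ → ℝ} (hhmeas : Measurable (fun p : ℝ × M × M => h p.1 p.2.1 p.2.2))
    (hηmeas : Measurable (fun p : ℝ × ℝ => η p.1 p.2)) (x y : M) (t : ℝ) :
    Measurable (fun u => h u x y * η t u) := by
  have hh : Measurable (fun u => h u x y) := hhmeas.comp
    (measurable_id.prodMk measurable_const : Measurable fun u : ℝ => (u, x, y))
  have hη : Measurable (fun u => η t u) := hηmeas.comp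
    (measurable_const.prodMk measurable_id : Measurable fun u : ℝ => (t, u))
  exact hh.mul hη

section MetricMeasure

variable {M : Type*} [MetricSpace M] [MeasurableSpace M] {μ : Measure M} {ν C₀ α : ℝ}
  {h : ℝ → M → M → ℝ} {η : ℝ → ℝ → ℝ}

lemma one_le_of_measureReal_ball_doubling (hV : ∀ x r, 0 < r → 0 < μ.real (ball x r))
    (hdoub : ∀ x r R, 0 < r → r ≤ R →
      μ.real (ball x R) ≤ C₀ * (R / r) ^ ν * μ.real (ball x r))
    (x : M) : 1 ≤ C₀ := by
  have h := hdoub x 1 1 one_pos le_rfl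
  rw [div_one, one_rpow, mul_one] at h
  exact (le_mul_iff_one_le_left (hV x 1 one_pos)).1 h

lemma measureReal_ball_le_mul_measureReal_ball_sqrt
    (hV : ∀ x r, 0 < r → 0 < μ.real (ball x r)) (hVfin : ∀ x r, 0 < r → μ (ball x r) < ⊤)
    (hν : 0 ≤ ν) (hdoub : ∀ x r R, 0 < r → r ≤ R →
      μ.real (ball x R) ≤ C₀ * (R / r) ^ ν * μ.real (ball x r))
    (y : M) {r u : ℝ} (hr : 0 < r) (hu : 0 < u) :
    μ.real (ball y r) ≤ C₀ * (1 + r ^ 2 / u) ^ (ν / 2) * μ.real (ball y (√u)) := by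
  have hsu : 0 < √u := sqrt_pos.2 hu
  have hC₀ : 1 ≤ C₀ := one_le_of_measureReal_ball_doubling hV hdoub y
  have hfac : 1 ≤ (1 + r ^ 2 / u) ^ (ν / 2) :=
    one_le_rpow (le_add_of_nonneg_right (by positivity)) (by positivity)
  rcases le_total r (√u) with hrs | hsr
  · calc μ.real (ball y r) ≤ μ.real (ball y (√u)) :=
          measureReal_mono (ball_subset_ball hrs) (hVfin y _ hsu).ne
      _ ≤ C₀ * (1 + r ^ 2 / u) ^ (ν / 2) * μ.real (ball y (√u)) :=
          le_mul_of_one_le_left (hV y _ hsu).le (one_le_mul_of_one_le_of_one_le hC₀ hfac)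
  · have hratio : (r / √u) ^ ν ≤ (1 + r ^ 2 / u) ^ (ν / 2) := by
      rw [show (r / √u) ^ ν = ((r / √u) ^ 2) ^ (ν / 2) by
        rw [← rpow_natCast, ← rpow_mul (by positivity)]; ring_nf]
      rw [div_pow, sq_sqrt hu.le]
      exact rpow_le_rpow (by positivity) (by linarith) (by positivity)
    calc μ.real (ball y r) ≤ C₀ * (r / √u) ^ ν * μ.real (ball y (√u)) := hdoub y _ _ hsu hsr
      _ ≤ C₀ * (1 + r ^ 2 / u) ^ (ν / 2) * μ.real (ball y (√u)) := by gcongr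

lemma measureReal_ball_le_of_dist_le (hν : 0 ≤ ν) (hC₀ : 0 ≤ C₀)
    (hcomp : ∀ x y r, 0 < r →
      μ.real (ball x r) ≤ C₀ * (1 + dist x y / r) ^ ν * μ.real (ball y r))
    {x y : M} {r : ℝ} (hr : 0 < r) (hxy : dist x y ≤ r) :
    μ.real (ball x r) ≤ C₀ * 2 ^ ν * μ.real (ball y r) := by
  refine (hcomp x y r hr).trans ?_
  gcongr
  linarith [(div_le_one hr).2 hxy]

lemma exists_heat_kernel_le {C₂ c₂ : ℝ} (hV : ∀ x r, 0 < r → 0 < μ.real (ball x r))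
    (hVfin : ∀ x r, 0 < r → μ (ball x r) < ⊤) (hν : 0 ≤ ν) (hC₀ : 0 < C₀)
    (hdoub : ∀ x r R, 0 < r → r ≤ R →
      μ.real (ball x R) ≤ C₀ * (R / r) ^ ν * μ.real (ball x r))
    (hC₂ : 0 ≤ C₂) (hc₂ : 0 < c₂)
    (hLY : ∀ u, 0 < u → ∀ x y,
      h u x y ≤ C₂ / μ.real (ball y (√u)) * exp (-c₂ * dist x y ^ 2 / u))
    (N : ℝ) :
    ∃ K, 0 ≤ K ∧ ∀ u x y r, 0 < u → 0 < r → h u x y ≤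
      K / μ.real (ball y r) * (1 + r ^ 2 / u) ^ (ν / 2) * (1 + dist x y ^ 2 / u) ^ (-N) := by
  obtain ⟨K, hK, hexp⟩ := exists_exp_neg_le_one_add_rpow_neg N hc₂
  refine ⟨C₂ * C₀ * K, by positivity, fun u x y r hu hr => ?_⟩
  have hVr := hV y r hr
  have hVu : μ.real (ball y r) / (C₀ * (1 + r ^ 2 / u) ^ (ν / 2)) ≤ μ.real (ball y (√u)) := by
    rw [div_le_iff₀' (by positivity)]
    exact measureReal_ball_le_mul_measureReal_ball_sqrt hV hVfin hν hdoub y hr hu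
  calc h u x y ≤ C₂ / μ.real (ball y (√u)) * exp (-(c₂ * (dist x y ^ 2 / u))) := by
        convert hLY u hu x y using 3; ring
    _ ≤ C₂ / (μ.real (ball y r) / (C₀ * (1 + r ^ 2 / u) ^ (ν / 2))) *
          (K * (1 + dist x y ^ 2 / u) ^ (-N)) := by
        gcongr
        exact hexp _ (by positivity)
    _ = C₂ * C₀ * K / μ.real (ball y r) * (1 + r ^ 2 / u) ^ (ν / 2) *
          (1 + dist x y ^ 2 / u) ^ (-N) := by
        field_simp

lemma le_heat_kernel {c₁ C₁ : ℝ} (hV : ∀ x r, 0 < r → 0 < μ.real (ball x r))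
    (hVfin : ∀ x r, 0 < r → μ (ball x r) < ⊤)
    (hdoub : ∀ x r R, 0 < r → r ≤ R →
      μ.real (ball x R) ≤ C₀ * (R / r) ^ ν * μ.real (ball x r))
    (hc₁ : 0 ≤ c₁) (hC₁ : 0 ≤ C₁)
    (hLY : ∀ u, 0 < u → ∀ x y,
      c₁ / μ.real (ball y (√u)) * exp (-C₁ * dist x y ^ 2 / u) ≤ h u x y)
    {x y : M} {ρ u : ℝ} (hρ : 0 < ρ) (hxy : dist x y ≤ ρ) (hρu : ρ ^ 2 ≤ u)
    (huρ : u ≤ 4 * ρ ^ 2) :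
    c₁ * exp (-C₁) / (C₀ * 2 ^ ν * μ.real (ball y ρ)) ≤ h u x y := by
  have hu : 0 < u := (by positivity : 0 < ρ ^ 2).trans_le hρu
  have hsu : √u ≤ 2 * ρ := (sqrt_le_left (by positivity)).2 (by linarith)
  have hVu : μ.real (ball y (√u)) ≤ C₀ * 2 ^ ν * μ.real (ball y ρ) := by
    calc μ.real (ball y (√u)) ≤ μ.real (ball y (2 * ρ)) :=
          measureReal_mono (ball_subset_ball hsu) (hVfin y _ (by positivity)).ne
      _ ≤ C₀ * (2 * ρ / ρ) ^ ν * μ.real (ball y ρ) := hdoub y _ _ hρ (by linarith)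
      _ = C₀ * 2 ^ ν * μ.real (ball y ρ) := by rw [mul_div_cancel_right₀ _ hρ.ne']
  have hexp : -C₁ ≤ -C₁ * dist x y ^ 2 / u := by
    rw [neg_mul, neg_div, neg_le_neg_iff, mul_div_assoc]
    refine mul_le_of_le_one_right hC₁ ((div_le_one hu).2 ?_)
    nlinarith [dist_nonneg (x := x) (y := y)]
  calc c₁ * exp (-C₁) / (C₀ * 2 ^ ν * μ.real (ball y ρ))
      = c₁ / (C₀ * 2 ^ ν * μ.real (ball y ρ)) * exp (-C₁) := by ring
    _ ≤ c₁ / μ.real (ball y (√u)) * exp (-C₁ * dist x y ^ 2 / u) := by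
        gcongr
        exact hV y _ (sqrt_pos.2 hu)
    _ ≤ h u x y := hLY u hu x y

lemma exists_heat_mul_density_le_stableProfile {C₂ c₂ Cs : ℝ} (hα0 : 0 < α) (hα2 : α < 2)
    (hV : ∀ x r, 0 < r → 0 < μ.real (ball x r)) (hVfin : ∀ x r, 0 < r → μ (ball x r) < ⊤)
    (hν : 0 ≤ ν) (hC₀ : 0 < C₀) (hdoub : ∀ x r R, 0 < r → r ≤ R →
      μ.real (ball x R) ≤ C₀ * (R / r) ^ ν * μ.real (ball x r))
    (hC₂ : 0 ≤ C₂) (hc₂ : 0 < c₂)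
    (hLY : ∀ u, 0 < u → ∀ x y,
      h u x y ≤ C₂ / μ.real (ball y (√u)) * exp (-c₂ * dist x y ^ 2 / u))
    (hCs : 0 ≤ Cs)
    (hsmall : ∀ t u, 0 < t → 0 < u → u ≤ t ^ (2 / α) → η t u ≤ Cs * stableSmallTime α t u)
    (hlarge : ∀ t u, 0 < t → 0 < u → t ^ (2 / α) < u → η t u ≤ Cs * (t * u ^ (-1 - α / 2)))
    (hη0 : ∀ t u, 0 < t → 0 < u → 0 ≤ η t u) :
    ∃ K, 0 ≤ K ∧ ∀ x y t u, 0 < t → 0 < u →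
      h u x y * η t u ≤ K * t / μ.real (ball y (t ^ (1 / α) + dist x y)) *
        stableProfile α (t ^ (1 / α) + dist x y) u := by
  obtain ⟨Kh, hKh, hheat⟩ := exists_heat_kernel_le hV hVfin hν hC₀ hdoub hC₂ hc₂ hLY (ν / 2 + α)
  obtain ⟨Kη, hKη, hdens⟩ :=
    exists_stable_density_le (N := ν / 2 + α) hα0 hα2 hCs (by positivity) hsmall hlarge
  refine ⟨2 ^ (ν / 2 + α) * Kh * Kη, by positivity, fun x y t u ht hu => ?_⟩
  set ρ := t ^ (1 / α) + dist x y
  have hρ : 0 < ρ := by positivity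
  have hρDT : ρ ^ 2 ≤ 2 * (t ^ (2 / α) + dist x y ^ 2) := by
    rw [rpow_two_div_eq_sq ht]; nlinarith [sq_nonneg (t ^ (1 / α) - dist x y)]
  calc h u x y * η t u ≤ 2 ^ (ν / 2 + α) * (Kh / μ.real (ball y ρ)) *
        (Kη * (t * u ^ (-1 - α / 2))) * min 1 ((u / ρ ^ 2) ^ α) :=
        mul_le_min_of_rpow_decay hu hρ hν hα0.le (sq_nonneg _) (by positivity) hρDT
          (div_nonneg hKh (hV y ρ hρ).le) (by positivity) (hη0 t u ht hu)
          (hheat u x y ρ hu hρ) (hdens t u ht hu)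
    _ = _ := by rw [stableProfile]; ring

lemma Pker_le_of_le_stableProfile {K : ℝ} (hα : 0 < α) (hν : 0 ≤ ν) (hC₀ : 0 ≤ C₀)
    (hK : 0 ≤ K) (hV : ∀ x r, 0 < r → 0 < μ.real (ball x r))
    (hcomp : ∀ x y r, 0 < r →
      μ.real (ball x r) ≤ C₀ * (1 + dist x y / r) ^ ν * μ.real (ball y r))
    {x y : M} {t : ℝ} (ht : 0 < t) (hint : IntegrableOn (fun u => h u x y * η t u) (Ioi 0))
    (hle : ∀ u, 0 < u → h u x y * η t u ≤ K * t / μ.real (ball y (t ^ (1 / α) + dist x y)) *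
      stableProfile α (t ^ (1 / α) + dist x y) u) :
    Pker h η t x y ≤ K * (4 / α) * (C₀ * 2 ^ ν) *
      (t / (μ.real (ball x (t ^ (1 / α) + dist x y)) * (t ^ (1 / α) + dist x y) ^ α)) := by
  set ρ := t ^ (1 / α) + dist x y
  have hρ : 0 < ρ := by positivity
  have hVx := hV x ρ hρ
  have hVy := hV y ρ hρ
  have hVxy : μ.real (ball x ρ) ≤ C₀ * 2 ^ ν * μ.real (ball y ρ) :=
    measureReal_ball_le_of_dist_le hν hC₀ hcomp hρ (le_add_of_nonneg_left (by positivity))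
  calc Pker h η t x y ≤ K * t / μ.real (ball y ρ) * (4 / α * ρ ^ (-α)) :=
        integral_le_of_le_stableProfile hα hρ hint hle
    _ = K * (4 / α) * (t / (μ.real (ball y ρ) * ρ ^ α)) := by rw [rpow_neg hρ.le]; ring
    _ ≤ K * (4 / α) * (C₀ * 2 ^ ν * (t / (μ.real (ball x ρ) * ρ ^ α))) := by
        refine mul_le_mul_of_nonneg_left ?_ (by positivity)
        rw [mul_div_assoc', div_le_div_iff₀ (by positivity) (by positivity)]
        linarith [mul_le_mul_of_nonneg_right hVxy (by positivity : (0:ℝ) ≤ t * ρ ^ α)]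
    _ = K * (4 / α) * (C₀ * 2 ^ ν) * (t / (μ.real (ball x ρ) * ρ ^ α)) := by ring

lemma le_Pker {c₁ C₁ cs : ℝ} (hα : 0 < α) (hν : 0 ≤ ν) (hC₀ : 0 < C₀)
    (hV : ∀ x r, 0 < r → 0 < μ.real (ball x r)) (hVfin : ∀ x r, 0 < r → μ (ball x r) < ⊤)
    (hdoub : ∀ x r R, 0 < r → r ≤ R →
      μ.real (ball x R) ≤ C₀ * (R / r) ^ ν * μ.real (ball x r))
    (hcomp : ∀ x y r, 0 < r →
      μ.real (ball x r) ≤ C₀ * (1 + dist x y / r) ^ ν * μ.real (ball y r))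
    (hc₁ : 0 ≤ c₁) (hC₁ : 0 ≤ C₁)
    (hLY : ∀ u, 0 < u → ∀ x y,
      c₁ / μ.real (ball y (√u)) * exp (-C₁ * dist x y ^ 2 / u) ≤ h u x y)
    (hcs : 0 ≤ cs)
    (hη : ∀ t u, 0 < t → 0 < u → t ^ (2 / α) < u → cs * (t * u ^ (-1 - α / 2)) ≤ η t u)
    (hη0 : ∀ t u, 0 < t → 0 < u → 0 ≤ η t u)
    {x y : M} {t : ℝ} (ht : 0 < t) (hint : IntegrableOn (fun u => h u x y * η t u) (Ioi 0)) :
    c₁ * exp (-C₁) * cs * 2 ^ (-1 - α / 2) / (C₀ * 2 ^ ν) ^ 2 *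
      (t / (μ.real (ball x (t ^ (1 / α) + dist x y)) * (t ^ (1 / α) + dist x y) ^ α)) ≤
      Pker h η t x y := by
  set ρ := t ^ (1 / α) + dist x y
  have hρ : 0 < ρ := by positivity
  have hVx := hV x ρ hρ
  have hVy := hV y ρ hρ
  have hxy : dist x y ≤ ρ := le_add_of_nonneg_left (by positivity)
  have hTρ : t ^ (2 / α) ≤ ρ ^ 2 := by
    rw [rpow_two_div_eq_sq ht]
    exact pow_le_pow_left₀ (by positivity) (le_add_of_nonneg_right dist_nonneg) 2
  have hh0 : ∀ u, 0 < u → 0 ≤ h u x y := fun u hu =>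
    (by positivity : 0 ≤ c₁ / μ.real (ball y (√u)) * exp (-C₁ * dist x y ^ 2 / u)).trans
      (hLY u hu x y)
  set m := c₁ * exp (-C₁) / (C₀ * 2 ^ ν * μ.real (ball y ρ)) *
    (cs * (t * (2 * ρ ^ 2) ^ (-1 - α / 2))) with hm_def
  have hm : ∀ u ∈ Ioc (ρ ^ 2) (2 * ρ ^ 2), m ≤ h u x y * η t u := by
    intro u ⟨hρu, huρ⟩
    have hu : 0 < u := (by positivity : 0 < ρ ^ 2).trans hρu
    have huρ' : u ≤ 4 * ρ ^ 2 := by linarith [sq_nonneg ρ]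
    refine mul_le_mul (le_heat_kernel hV hVfin hdoub hc₁ hC₁ hLY hρ hxy hρu.le huρ')
      ?_ (by positivity) (hh0 u hu)
    calc cs * (t * (2 * ρ ^ 2) ^ (-1 - α / 2)) ≤ cs * (t * u ^ (-1 - α / 2)) :=
          mul_le_mul_of_nonneg_left (mul_le_mul_of_nonneg_left
            (rpow_le_rpow_of_nonpos hu huρ (by linarith)) ht.le) hcs
      _ ≤ η t u := hη t u ht hu (hTρ.trans_lt hρu)
  have hlow := mul_le_integral_Ioi_of_le_on_Ioc (sq_nonneg ρ) (by linarith [sq_nonneg ρ]) hint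
    (fun u hu => mul_nonneg (hh0 u hu) (hη0 t u ht hu)) hm
  refine le_trans ?_ hlow
  have hrpow : (2 * ρ ^ 2) ^ (-1 - α / 2) * (2 * ρ ^ 2 - ρ ^ 2) = 2 ^ (-1 - α / 2) / ρ ^ α := by
    rw [show 2 * ρ ^ 2 - ρ ^ 2 = ρ ^ 2 by ring, mul_rpow zero_le_two (by positivity),
      ← rpow_natCast ρ 2, ← rpow_mul hρ.le, mul_assoc, ← rpow_add hρ,
      show ((2 : ℕ) : ℝ) * (-1 - α / 2) + (2 : ℕ) = -α by push_cast; ring, rpow_neg hρ.le]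
    ring
  have hVyx : μ.real (ball y ρ) ≤ C₀ * 2 ^ ν * μ.real (ball x ρ) :=
    measureReal_ball_le_of_dist_le hν hC₀.le hcomp hρ (by rwa [dist_comm])
  calc c₁ * exp (-C₁) * cs * 2 ^ (-1 - α / 2) / (C₀ * 2 ^ ν) ^ 2 *
        (t / (μ.real (ball x ρ) * ρ ^ α))
      = c₁ * exp (-C₁) * cs * 2 ^ (-1 - α / 2) * t /
          (C₀ * 2 ^ ν * (C₀ * 2 ^ ν * μ.real (ball x ρ)) * ρ ^ α) := by ring
    _ ≤ c₁ * exp (-C₁) * cs * 2 ^ (-1 - α / 2) * t /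
          (C₀ * 2 ^ ν * μ.real (ball y ρ) * ρ ^ α) := by gcongr
    _ = c₁ * exp (-C₁) / (C₀ * 2 ^ ν * μ.real (ball y ρ)) *
          (cs * (t * ((2 * ρ ^ 2) ^ (-1 - α / 2) * (2 * ρ ^ 2 - ρ ^ 2)))) := by
        rw [hrpow]; field_simp
    _ = m * (2 * ρ ^ 2 - ρ ^ 2) := by rw [hm_def]; ring

end MetricMeasure

theorem stmt_10_general
    {M : Type*} [MetricSpace M] [MeasurableSpace M]
    (μ : Measure M)
    (hVpos : ∀ (x : M) (r : ℝ), 0 < r → 0 < μ (ball x r))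
    (hVfin : ∀ (x : M) (r : ℝ), 0 < r → μ (ball x r) < ⊤)
    -- volume comparability
    (ν ν' c₀ C₀ : ℝ) (hν' : 0 < ν') (hνν : ν' ≤ ν) (hc₀ : 0 < c₀) (hc₀C₀ : c₀ ≤ C₀)
    (hdoub : ∀ (x : M) (r R : ℝ), 0 < r → r ≤ R →
        c₀ * (R/r) ^ ν' ≤ (μ (ball x R)).toReal / (μ (ball x r)).toReal ∧
        (μ (ball x R)).toReal / (μ (ball x r)).toReal ≤ C₀ * (R/r) ^ ν)
    (hcomp : ∀ (x y : M) (r : ℝ), 0 < r →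
        (μ (ball x r)).toReal ≤ C₀ * (1 + dist x y / r) ^ ν * (μ (ball y r)).toReal)
    -- heat kernel with Li–Yau two-sided Gaussian estimate
    (h : ℝ → M → M → ℝ)
    (hhmeas : Measurable (fun p : ℝ × M × M => h p.1 p.2.1 p.2.2))
    (c₁ C₁ c₂ C₂ : ℝ) (hc₁ : 0 < c₁) (hC₁ : 0 < C₁) (hc₂ : 0 < c₂) (hC₂ : 0 < C₂)
    (hLY : ∀ u : ℝ, 0 < u → ∀ x y : M,
        c₁ / (μ (ball y (Real.sqrt u))).toReal * Real.exp (-C₁ * (dist x y)^2 / u) ≤ h u x y ∧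
        h u x y ≤ C₂ / (μ (ball y (Real.sqrt u))).toReal * Real.exp (-c₂ * (dist x y)^2 / u))
    -- stable subordinator densities with two-sided bounds
    (α : ℝ) (hα0 : 0 < α) (hα2 : α < 2)
    (η : ℝ → ℝ → ℝ)
    (hηmeas : Measurable (fun p : ℝ × ℝ => η p.1 p.2))
    (hηpos : ∀ t : ℝ, 0 < t → ∀ u : ℝ, 0 < u → 0 < η t u)
    (cs Cs : ℝ) (hcs : 0 < cs) (hcsCs : cs ≤ Cs)
    (hηbd : ∀ t : ℝ, 0 < t → ∀ u : ℝ, 0 < u →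
        (u ≤ t ^ (2/α) →
          cs ≤ η t u / (t ^ (1/(2-α)) * u ^ (-((4-α)/(4-2*α))) *
              Real.exp (-(((2-α)/2) * (α/2) ^ (α/(2-α))) * t ^ (2/(2-α)) * u ^ (-(α/(2-α))))) ∧
          η t u / (t ^ (1/(2-α)) * u ^ (-((4-α)/(4-2*α))) *
              Real.exp (-(((2-α)/2) * (α/2) ^ (α/(2-α))) * t ^ (2/(2-α)) * u ^ (-(α/(2-α))))) ≤ Cs) ∧
        (t ^ (2/α) < u →
          cs ≤ η t u / (t * u ^ (-1-α/2)) ∧ η t u / (t * u ^ (-1-α/2)) ≤ Cs)) :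
    ∃ c' C' : ℝ, 0 < c' ∧ c' ≤ C' ∧ ∀ (x y : M) (t : ℝ), 0 < t →
      c' * (t / ((μ (ball x (t ^ (1/α) + dist x y))).toReal *
            (t ^ (1/α) + dist x y) ^ α))
        ≤ Pker h η t x y ∧
      Pker h η t x y ≤
        C' * (t / ((μ (ball x (t ^ (1/α) + dist x y))).toReal *
            (t ^ (1/α) + dist x y) ^ α)) := by
  have hC₀ : 0 < C₀ := hc₀.trans_le hc₀C₀
  have hν : 0 ≤ ν := hν'.le.trans hνν
  have hV : ∀ x r, 0 < r → 0 < μ.real (ball x r) := fun x r hr =>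
    ENNReal.toReal_pos (hVpos x r hr).ne' (hVfin x r hr).ne
  have hdoub' : ∀ x r R, 0 < r → r ≤ R →
      μ.real (ball x R) ≤ C₀ * (R / r) ^ ν * μ.real (ball x r) :=
    fun x r R hr hrR => (div_le_iff₀ (hV x r hr)).1 (hdoub x r R hr hrR).2
  have hh0 : ∀ u x y, 0 < u → 0 ≤ h u x y := fun u x y hu =>
    (by positivity : 0 ≤ c₁ / μ.real (ball y (√u)) * exp (-C₁ * dist x y ^ 2 / u)).trans
      (hLY u hu x y).1
  have hη0 : ∀ t u, 0 < t → 0 < u → 0 ≤ η t u := fun t u ht hu => (hηpos t ht u hu).le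
  obtain ⟨K, hK, hpt⟩ := exists_heat_mul_density_le_stableProfile hα0 hα2 hV hVfin hν hC₀
    hdoub' hC₂.le hc₂ (fun u hu x y => (hLY u hu x y).2) (hcs.trans_le hcsCs).le
    (fun t u ht hu hut => (div_le_iff₀ (stableSmallTime_pos ht hu)).1 ((hηbd t ht u hu).1 hut).2)
    (fun t u ht hu hut => (div_le_iff₀ (by positivity)).1 ((hηbd t ht u hu).2 hut).2) hη0
  have hint : ∀ x y t, 0 < t → IntegrableOn (fun u => h u x y * η t u) (Ioi 0) :=
    fun x y t ht => integrableOn_of_le_stableProfile hα0 (by positivity)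
      (measurable_heat_mul_density hhmeas hηmeas x y t).aestronglyMeasurable
      (fun u hu => mul_nonneg (hh0 u x y hu) (hη0 t u ht hu)) (hpt x y t · ht)
  refine ⟨c₁ * exp (-C₁) * cs * 2 ^ (-1 - α / 2) / (C₀ * 2 ^ ν) ^ 2, _, by positivity,
    le_max_left _ (K * (4 / α) * (C₀ * 2 ^ ν)), fun x y t ht => ⟨?_, ?_⟩⟩
  · exact le_Pker hα0 hν hC₀ hV hVfin hdoub' hcomp hc₁.le hC₁.le (fun u hu x y => (hLY u hu x y).1)
      hcs.le (fun t u ht hu hut => (le_div_iff₀ (by positivity)).1 ((hηbd t ht u hu).2 hut).1)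
      hη0 ht (hint x y t ht)
  · exact (Pker_le_of_le_stableProfile hα0 hν hC₀.le hK hV hcomp ht (hint x y t ht)
      (hpt x y t · ht)).trans (mul_le_mul_of_nonneg_right (le_max_right _ _) (by positivity))

/-- two-sided bound for the fractional heat kernel
`P_t^α(x,y) ≍ t / ( V(x, t^{1/α}+d(x,y)) (t^{1/α}+d(x,y))^{α} )`. -/
theorem stmt_10
    {M : Type*} [MetricSpace M] [MeasurableSpace M] [BorelSpace M]
    (μ : Measure M)
    (hVpos : ∀ (x : M) (r : ℝ), 0 < r → 0 < μ (ball x r))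
    (hVfin : ∀ (x : M) (r : ℝ), 0 < r → μ (ball x r) < ⊤)
    -- volume comparability
    (ν ν' c₀ C₀ : ℝ) (hν' : 0 < ν') (hνν : ν' ≤ ν) (hc₀ : 0 < c₀) (hc₀C₀ : c₀ ≤ C₀)
    (hdoub : ∀ (x : M) (r R : ℝ), 0 < r → r ≤ R →
        c₀ * (R/r) ^ ν' ≤ (μ (ball x R)).toReal / (μ (ball x r)).toReal ∧
        (μ (ball x R)).toReal / (μ (ball x r)).toReal ≤ C₀ * (R/r) ^ ν)
    (hcomp : ∀ (x y : M) (r : ℝ), 0 < r →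
        (μ (ball x r)).toReal ≤ C₀ * (1 + dist x y / r) ^ ν * (μ (ball y r)).toReal)
    -- heat kernel with Li–Yau two-sided Gaussian estimate
    (h : ℝ → M → M → ℝ)
    (hhmeas : Measurable (fun p : ℝ × M × M => h p.1 p.2.1 p.2.2))
    (hhsym : ∀ u : ℝ, 0 < u → ∀ x y : M, h u x y = h u y x)
    (c₁ C₁ c₂ C₂ : ℝ) (hc₁ : 0 < c₁) (hC₁ : 0 < C₁) (hc₂ : 0 < c₂) (hC₂ : 0 < C₂)
    (hLY : ∀ u : ℝ, 0 < u → ∀ x y : M,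
        c₁ / (μ (ball y (Real.sqrt u))).toReal * Real.exp (-C₁ * (dist x y)^2 / u) ≤ h u x y ∧
        h u x y ≤ C₂ / (μ (ball y (Real.sqrt u))).toReal * Real.exp (-c₂ * (dist x y)^2 / u))
    -- stable subordinator densities with two-sided bounds
    (α : ℝ) (hα0 : 0 < α) (hα2 : α < 2)
    (η : ℝ → ℝ → ℝ)
    (hηmeas : Measurable (fun p : ℝ × ℝ => η p.1 p.2))
    (hηpos : ∀ t : ℝ, 0 < t → ∀ u : ℝ, 0 < u → 0 < η t u)
    (cs Cs : ℝ) (hcs : 0 < cs) (hcsCs : cs ≤ Cs)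
    (hηbd : ∀ t : ℝ, 0 < t → ∀ u : ℝ, 0 < u →
        (u ≤ t ^ (2/α) →
          cs ≤ η t u / (t ^ (1/(2-α)) * u ^ (-((4-α)/(4-2*α))) *
              Real.exp (-(((2-α)/2) * (α/2) ^ (α/(2-α))) * t ^ (2/(2-α)) * u ^ (-(α/(2-α))))) ∧
          η t u / (t ^ (1/(2-α)) * u ^ (-((4-α)/(4-2*α))) *
              Real.exp (-(((2-α)/2) * (α/2) ^ (α/(2-α))) * t ^ (2/(2-α)) * u ^ (-(α/(2-α))))) ≤ Cs) ∧
        (t ^ (2/α) < u →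
          cs ≤ η t u / (t * u ^ (-1-α/2)) ∧ η t u / (t * u ^ (-1-α/2)) ≤ Cs)) :
    ∃ c' C' : ℝ, 0 < c' ∧ c' ≤ C' ∧ ∀ (x y : M) (t : ℝ), 0 < t →
      c' * (t / ((μ (ball x (t ^ (1/α) + dist x y))).toReal *
            (t ^ (1/α) + dist x y) ^ α))
        ≤ Pker h η t x y ∧
      Pker h η t x y ≤
        C' * (t / ((μ (ball x (t ^ (1/α) + dist x y))).toReal *
            (t ^ (1/α) + dist x y) ^ α)) :=
  stmt_10_general μ hVpos hVfin ν ν' c₀ C₀ hν' hνν hc₀ hc₀C₀ hdoub hcomp h hhmeas c₁ C₁ c₂ C₂ hc₁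
    hC₁ hc₂ hC₂ hLY α hα0 hα2 η hηmeas hηpos cs Cs hcs hcsCs hηbd
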